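/- Let p be a prime and m > 0 an integer, and let Φ be an edge-monotone graph property that is nontrivial on p^m. Let c and d be positive integers with c·d ≤ |F_{p^m}^+|, and suppose there exists A ⊆ F_{p^m}^+ with |A| ≥ |F_{p^m}^+| − d and Φ(C^A) = 1. Then there exists B ⊆ F_{p^m}^+ with |B| ≥ c and χ̂(Φ, C^B) ≢ 0 (mod p). -/

import Mathlib

open scoped Classical

/-- `P` is a valid choice of `F^+`: a set of nonzero elements containing exactly one of
`x` and `−x` for every nonzero `x`. -/
def IsPlusSet {F : Type*} [Field F] (P : Set F) : Prop :=
  0 ∉ P ∧ ∀ x : F, x ≠ 0 → ((x ∈ P ∨ -x ∈ P) ∧ (x ∈ P → -x ∈ P → x = -x))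

/-- The alternating enumerator `χ̂(Φ,H) = Σ_{S ⊆ E(H)} Φ(H[S])·(−1)^{|S|}`. -/
noncomputable def altEnum {V : Type*} [Fintype V] [DecidableEq V]
    (Φ : SimpleGraph V → Prop) (H : SimpleGraph V) : ℤ :=
  ∑ S ∈ H.edgeFinset.powerset,
    if Φ (SimpleGraph.fromEdgeSet (S : Set (Sym2 V))) then (-1 : ℤ) ^ S.card else 0

/-!
The additive group of `F_{p^m}` is a `p`-group acting on the spanning subgraphs of `C^B` by
translation, and `Φ` and the sign `(-1)^{|E|}` are constant on orbits. Modulo `p` only the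
fixed points survive, and the translation-invariant subgraphs of `C^B` are exactly the `C^{B'}`
with `B' ⊆ B`; as `C^{B'}` has `|B'|·p^m` edges for odd `p`, this gives
`χ̂(Φ, C^B) ≡ Σ_{B' ⊆ B} Φ(C^{B'}) (-1)^{|B'|} (mod p)`.
For an inclusion-minimal `B ⊆ F^+` with `Φ(C^B) = 0` the right-hand side is `-(-1)^{|B|} ≠ 0`.
Such a `B` has at least `c` elements: if `|B| < c`, a counting argument gives `λ ≠ 0` with
`λB ⊆ A ∪ -A`, so `C^B ≅ C^{λB}` is a subgraph of `C^A` and satisfies `Φ`.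
-/

open Finset SimpleGraph MulAction
open scoped Pointwise

theorem MulAction.sum_eq_sum_orbitRel_quotient {G α M : Type*} [Group G] [MulAction G α]
    [Fintype α] [AddCommMonoid M] {f : α → M} (hf : ∀ (g : G) (x : α), f (g • x) = f x) :
    ∑ x, f x = ∑ ω : orbitRel.Quotient G α, Nat.card (orbit G ω.out) • f ω.out := by
  rw [← (selfEquivSigmaOrbits G α).symm.sum_comp, Fintype.sum_sigma]
  refine Fintype.sum_congr _ _ fun ω => ?_
  change ∑ y : orbit G ω.out, f y = _
  have hconst : ∀ y : orbit G ω.out, f y = f ω.out := by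
    rintro ⟨_, g, rfl⟩
    exact hf g _
  simp [hconst, Nat.card_eq_fintype_card]

theorem IsPGroup.sum_modEq_sum_fixedPoints {p : ℕ} [Fact p.Prime] {G α : Type*} [Group G]
    [MulAction G α] [Fintype α] (hG : IsPGroup p G) {f : α → ℤ}
    (hf : ∀ (g : G) (x : α), f (g • x) = f x) :
    ∑ x, f x ≡ ∑ x ∈ univ.filter (· ∈ fixedPoints G α), f x [ZMOD p] := by
  have hfixed : ∀ (g : G) (x : α), g • x ∈ fixedPoints G α ↔ x ∈ fixedPoints G α := by
    refine fun g x => ⟨fun hgx => ?_, fun hx => by rwa [hx g]⟩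
    rwa [← inv_smul_smul g x, hgx g⁻¹]
  have hg : ∀ (g : G) (x : α), (if g • x ∈ fixedPoints G α then f (g • x) else 0) =
      if x ∈ fixedPoints G α then f x else 0 := by
    simp only [hfixed, hf, implies_true]
  calc ∑ x, f x = ∑ ω : orbitRel.Quotient G α, Nat.card (orbit G ω.out) • f ω.out :=
        sum_eq_sum_orbitRel_quotient hf
    _ ≡ ∑ ω : orbitRel.Quotient G α, Nat.card (orbit G ω.out) •
          (if ω.out ∈ fixedPoints G α then f ω.out else 0) [ZMOD p] := by
      refine Int.ModEq.sum fun ω _ => ?_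
      split_ifs with hω
      · rfl
      obtain ⟨k, hk⟩ := hG.card_orbit ω.out
      have hk0 : k ≠ 0 := by
        rintro rfl
        exact hω (mem_fixedPoints_iff_card_orbit_eq_one.mpr
          (by simpa [Nat.card_eq_fintype_card] using hk))
      rw [hk, smul_zero, nsmul_eq_mul, Int.modEq_zero_iff_dvd]
      exact Dvd.dvd.mul_right (by exact_mod_cast dvd_pow_self p hk0) _
    _ = ∑ x, if x ∈ fixedPoints G α then f x else 0 :=
      (sum_eq_sum_orbitRel_quotient (f := fun x => if x ∈ fixedPoints G α then f x else 0) hg).symm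
    _ = _ := (sum_filter _ _).symm

namespace SimpleGraph

section Action

variable {G V : Type*} [Group G] [MulAction G V]

instance : MulAction G (SimpleGraph V) where
  smul g H := H.comap (g⁻¹ • ·)
  one_smul H := by
    ext u v
    change H.Adj ((1 : G)⁻¹ • u) ((1 : G)⁻¹ • v) ↔ _
    simp
  mul_smul g h H := by
    ext u v
    change H.Adj ((g * h)⁻¹ • u) ((g * h)⁻¹ • v) ↔ H.Adj (h⁻¹ • g⁻¹ • u) (h⁻¹ • g⁻¹ • v)
    simp [mul_smul]

@[simp]
theorem smul_adj (g : G) (H : SimpleGraph V) (u v : V) :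
    (g • H).Adj u v ↔ H.Adj (g⁻¹ • u) (g⁻¹ • v) :=
  Iff.rfl

def smulIso (g : G) (H : SimpleGraph V) : H ≃g g • H where
  toEquiv := MulAction.toPerm g
  map_rel_iff' := by simp

theorem smul_le_smul_iff {g : G} {H K : SimpleGraph V} : g • H ≤ g • K ↔ H ≤ K := by
  refine ⟨fun h u v huv => ?_, fun h u v huv => h huv⟩
  simpa using @h (g • u) (g • v) (by simpa using huv)

end Action

theorem circulantGraph_mono {V : Type*} [AddGroup V] {s t : Set V} (h : s ⊆ t) :
    circulantGraph s ≤ circulantGraph t := fun u v huv => by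
  rw [circulantGraph_adj] at huv ⊢
  exact ⟨huv.1, huv.2.imp (@h _) (@h _)⟩

def circulantGraphCongr {V W : Type*} [AddGroup V] [AddGroup W] (σ : V ≃+ W) (s : Set V) :
    circulantGraph s ≃g circulantGraph (σ '' s) where
  toEquiv := σ.toEquiv
  map_rel_iff' {u v} := by
    simp [circulantGraph_adj, ← map_sub, σ.injective.mem_set_image]

theorem degree_circulantGraph {V : Type*} [AddGroup V] [Fintype V] [DecidableEq V] (s : Finset V)
    (hs : 0 ∉ s) (v : V) : (circulantGraph (s : Set V)).degree v = #(s ∪ -s) := by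
  have hnbr : (circulantGraph (s : Set V)).neighborFinset v = (s ∪ -s).image (· + v) := by
    ext w
    simp only [mem_neighborFinset, circulantGraph_adj, mem_image, mem_union, mem_neg', mem_coe]
    constructor
    · rintro ⟨-, h | h⟩
      · exact ⟨w - v, Or.inr (by rwa [neg_sub]), sub_add_cancel w v⟩
      · exact ⟨w - v, Or.inl h, sub_add_cancel w v⟩
    · rintro ⟨a, ha, rfl⟩
      have ha0 : a ≠ 0 := by rintro rfl; simp_all
      simpa [ha0, or_comm] using ha
  rw [← card_neighborFinset_eq_degree, hnbr, card_image_of_injective _ (add_left_injective v)]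

section Translation

variable {V : Type*} [AddCommGroup V]

theorem adj_add_add_iff_of_mem_fixedPoints {H : SimpleGraph V}
    (hH : H ∈ fixedPoints (Multiplicative V) (SimpleGraph V)) (a u v : V) :
    H.Adj (a + u) (a + v) ↔ H.Adj u v := by
  conv_rhs => rw [← hH (Multiplicative.ofAdd (-a))]
  simp

theorem circulantGraph_mem_fixedPoints (s : Set V) :
    circulantGraph s ∈ fixedPoints (Multiplicative V) (SimpleGraph V) := by
  intro g
  ext u v
  obtain ⟨a, rfl⟩ := Multiplicative.ofAdd.surjective g
  simp [circulantGraph_adj, ← ofAdd_neg]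

theorem eq_circulantGraph_of_mem_fixedPoints {H : SimpleGraph V}
    (hH : H ∈ fixedPoints (Multiplicative V) (SimpleGraph V)) {s : Set V}
    (hs : s ⊆ H.neighborSet 0) (hs' : H.neighborSet 0 ⊆ s ∪ -s) : H = circulantGraph s := by
  have hadj : ∀ u v, H.Adj u v ↔ H.Adj 0 (v - u) := fun u v => by
    rw [← adj_add_add_iff_of_mem_fixedPoints hH (-u)]
    simp [sub_eq_neg_add]
  ext u v
  rw [circulantGraph_adj]
  constructor
  · intro h
    refine ⟨h.ne, ?_⟩
    rcases hs' ((hadj u v).mp h) with h' | h'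
    · exact Or.inr h'
    · exact Or.inl (by simpa using h')
  · rintro ⟨-, h | h⟩
    · exact ((hadj v u).mpr (hs h)).symm
    · exact (hadj u v).mpr (hs h)

theorem circulantGraph_filter_adj_zero_eq_of_mem_fixedPoints {H : SimpleGraph V}
    (hH : H ∈ fixedPoints (Multiplicative V) (SimpleGraph V)) {s : Finset V}
    (hHs : H ≤ circulantGraph (s : Set V)) : circulantGraph ↑(s.filter (H.Adj 0 ·)) = H := by
  refine (eq_circulantGraph_of_mem_fixedPoints hH (fun x hx => by simp_all) fun x hx => ?_).symm
  have hx' : H.Adj 0 x := hx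
  rcases (hHs hx').2 with h | h
  · rw [zero_sub] at h
    have : H.Adj 0 (-x) := by
      simpa using (adj_add_add_iff_of_mem_fixedPoints hH (-x) x 0).mpr hx'.symm
    simp [mem_coe.mp h, this]
  · rw [sub_zero] at h
    simp [mem_coe.mp h, hx']

end Translation

end SimpleGraph

theorem altEnum_eq_sum_le {V : Type*} [Fintype V] [DecidableEq V] (Φ : SimpleGraph V → Prop)
    (H : SimpleGraph V) :
    altEnum Φ H = ∑ K : SimpleGraph V, if K ≤ H ∧ Φ K then (-1 : ℤ) ^ #K.edgeFinset else 0 := by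
  simp only [ite_and]
  rw [← sum_filter, altEnum]
  have hedges : ∀ S ∈ H.edgeFinset.powerset, (fromEdgeSet (S : Set (Sym2 V))).edgeFinset = S := by
    intro S hS
    ext e
    rw [mem_edgeFinset, edgeSet_fromEdgeSet, Set.mem_sdiff, mem_coe, and_iff_left_iff_imp]
    exact fun he => not_isDiag_of_mem_edgeSet H (mem_edgeFinset.mp (mem_powerset.mp hS he))
  refine sum_nbij' (fun S => fromEdgeSet ↑S) (fun K => K.edgeFinset) ?_ ?_ ?_ ?_ ?_
  · intro S hS
    rw [mem_filter_univ, fromEdgeSet_le]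
    exact fun e he => mem_edgeFinset.mp (mem_powerset.mp hS he.1)
  · intro K hK
    simpa using hK
  · intro S hS
    convert hedges S hS
  · intro K _
    simp
  · intro S hS
    congr 2
    convert (congrArg card (hedges S hS)).symm

namespace IsPlusSet

variable {F : Type*} [Field F] {P : Set F}

theorem ne_zero (hP : IsPlusSet P) {x : F} (hx : x ∈ P) : x ≠ 0 :=
  fun h => hP.1 (h ▸ hx)

theorem mem_or_neg_mem (hP : IsPlusSet P) {x : F} (hx : x ≠ 0) : x ∈ P ∨ -x ∈ P :=
  (hP.2 x hx).1

theorem eq_neg_of_mem_of_neg_mem (hP : IsPlusSet P) {x : F} (hx : x ∈ P) (hnx : -x ∈ P) :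
    x = -x :=
  (hP.2 x (hP.ne_zero hx)).2 hx hnx

theorem circulantGraph_eq_top (hP : IsPlusSet P) : circulantGraph P = ⊤ := by
  ext u v
  rw [circulantGraph_adj, top_adj, and_iff_left_iff_imp]
  intro huv
  simpa only [neg_sub] using hP.mem_or_neg_mem (sub_ne_zero_of_ne huv)

theorem circulantGraph_adj_zero_iff (hP : IsPlusSet P) {s : Set F} (hs : s ⊆ P) {b : F}
    (hb : b ∈ P) : (circulantGraph s).Adj 0 b ↔ b ∈ s := by
  rw [circulantGraph_adj, zero_sub, sub_zero]
  refine ⟨?_, fun h => ⟨(hP.ne_zero hb).symm, Or.inr h⟩⟩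
  rintro ⟨-, h | h⟩
  · rwa [hP.eq_neg_of_mem_of_neg_mem hb (hs h)]
  · exact h

variable [DecidableEq F]

theorem card_filter_pair_le_one (hP : IsPlusSet P) (x : F) :
    #(({x, -x} : Finset F).filter (· ∈ P)) ≤ 1 := by
  refine card_le_one.mpr fun a ha b hb => ?_
  simp only [mem_filter, mem_insert, mem_singleton] at ha hb
  obtain ⟨ha | rfl, haP⟩ := ha <;> obtain ⟨hb | rfl, hbP⟩ := hb <;> subst_vars
  · rfl
  · exact hP.eq_neg_of_mem_of_neg_mem haP hbP
  · exact (hP.eq_neg_of_mem_of_neg_mem hbP haP).symm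
  · rfl

theorem disjoint_neg (hP : IsPlusSet P) (h2 : (2 : F) ≠ 0) {s : Finset F} (hs : ↑s ⊆ P) :
    Disjoint s (-s) := by
  refine disjoint_left.mpr fun x hx hnx => ?_
  have hx0 := hP.ne_zero (hs hx)
  have := hP.eq_neg_of_mem_of_neg_mem (hs hx) (hs (mem_neg'.mp hnx))
  exact hx0 (by simpa [h2] using (show (2 : F) * x = 0 by linear_combination this))

variable [Fintype F]

theorem card_edgeFinset_circulantGraph (hP : IsPlusSet P)
    (h2 : (2 : F) ≠ 0) {s : Finset F} (hs : ↑s ⊆ P) :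
    #(circulantGraph (s : Set F)).edgeFinset = #s * Fintype.card F := by
  have hdeg : ∀ v, (circulantGraph (s : Set F)).degree v = 2 * #s := fun v => by
    calc _ = #(s ∪ -s) := degree_circulantGraph s (fun h => hP.1 (hs h)) v
      _ = #s + #(-s) := card_union_of_disjoint (hP.disjoint_neg h2 hs)
      _ = 2 * #s := by rw [card_neg, two_mul]
  have hsum := (circulantGraph (s : Set F)).sum_degrees_eq_twice_card_edges
  simp only [hdeg, sum_const, card_univ, smul_eq_mul] at hsum
  linarith

theorem exists_mul_mem (hP : IsPlusSet P) {A : Set F}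
    (B : Finset F) (hB : ↑B ⊆ P) (h : #B * (P \ A).ncard < P.ncard) :
    ∃ a ≠ 0, ∀ b ∈ B, a * b ∈ A ∪ -A := by
  set D := (P \ A).toFinset
  -- `a` is bad if `a * b = ± y` for some `b ∈ B`, `y ∈ D`; each pair `(b, y)` makes at most
  -- one element of `P` bad.
  set bad := (B ×ˢ D).biUnion fun x => ({x.2 / x.1, -(x.2 / x.1)} : Finset F).filter (· ∈ P)
  have hbad : #bad < #P.toFinset := by
    calc #bad ≤ #(B ×ˢ D) * 1 :=
          card_biUnion_le_card_mul _ _ _ fun x _ => hP.card_filter_pair_le_one _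
      _ < #P.toFinset := by
        rwa [mul_one, card_product, ← Set.ncard_eq_toFinset_card', ← Set.ncard_eq_toFinset_card']
  obtain ⟨a, haP, habad⟩ := exists_mem_notMem_of_card_lt_card hbad
  rw [Set.mem_toFinset] at haP
  have ha0 := hP.ne_zero haP
  refine ⟨a, ha0, fun b hb => ?_⟩
  by_contra hab
  simp only [Set.mem_union, Set.mem_neg, not_or] at hab
  have hb0 := hP.ne_zero (hB hb)
  obtain ⟨y, hyD, hy⟩ : ∃ y ∈ D, a = y / b ∨ a = -(y / b) := by
    rcases hP.mem_or_neg_mem (mul_ne_zero ha0 hb0) with h | h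
    · exact ⟨a * b, by simp [D, h, hab.1], Or.inl (by field_simp)⟩
    · exact ⟨-(a * b), by simp [D, h, hab.2], Or.inr (by field_simp)⟩
  refine habad (mem_biUnion.mpr ⟨(b, y), mem_product.mpr ⟨hb, hyD⟩, mem_filter.mpr ⟨?_, haP⟩⟩)
  rcases hy with rfl | rfl <;> simp

theorem sum_fixedPoints_le_circulantGraph {M : Type*} [AddCommMonoid M] (hP : IsPlusSet P)
    (w : SimpleGraph F → M) (B : Finset F) (hB : ↑B ⊆ P) :
    ∑ K ∈ (univ.filter (· ∈ fixedPoints (Multiplicative F) (SimpleGraph F))).filter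
      (· ≤ circulantGraph (B : Set F)), w K = ∑ B' ∈ B.powerset, w (circulantGraph ↑B') := by
  refine sum_nbij' (fun K => B.filter (K.Adj 0 ·)) (fun B' => circulantGraph ↑B') ?_ ?_ ?_ ?_ ?_
  · exact fun K _ => mem_powerset.mpr (filter_subset _ _)
  · intro B' hB'
    simp only [mem_filter, mem_univ, true_and]
    exact ⟨circulantGraph_mem_fixedPoints _,
      circulantGraph_mono (coe_subset.mpr (mem_powerset.mp hB'))⟩
  · intro K hK
    simp only [mem_filter, mem_univ, true_and] at hK
    exact circulantGraph_filter_adj_zero_eq_of_mem_fixedPoints hK.1 hK.2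
  · intro B' hB'
    have hB'P : ↑B' ⊆ P := (coe_subset.mpr (mem_powerset.mp hB')).trans hB
    ext b
    simp only [mem_filter]
    constructor
    · rintro ⟨hbB, hadj⟩
      exact (hP.circulantGraph_adj_zero_iff hB'P (hB hbB)).mp hadj
    · intro hb
      have hbB := mem_powerset.mp hB' hb
      exact ⟨hbB, (hP.circulantGraph_adj_zero_iff hB'P (hB hbB)).mpr hb⟩
  · intro K hK
    simp only [mem_filter, mem_univ, true_and] at hK
    rw [circulantGraph_filter_adj_zero_eq_of_mem_fixedPoints hK.1 hK.2]

theorem neg_one_pow_card_edgeFinset_circulantGraph_modEq {p m : ℕ} (hp : p.Prime)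
    (hF : Fintype.card F = p ^ m) (hP : IsPlusSet P) {s : Finset F} (hs : ↑s ⊆ P) :
    (-1 : ℤ) ^ #(circulantGraph (s : Set F)).edgeFinset ≡ (-1) ^ #s [ZMOD p] := by
  rcases hp.eq_two_or_odd' with rfl | hodd
  · have hone : ∀ n : ℕ, (-1 : ℤ) ^ n ≡ 1 [ZMOD 2] := fun n => by
      simpa using (show (-1 : ℤ) ≡ 1 [ZMOD 2] by decide).pow n
    exact (hone _).trans (hone _).symm
  have h2 : (2 : F) ≠ 0 := Ring.two_ne_zero fun h => by
    have := FiniteField.even_card_iff_char_two.mp h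
    rw [hF, ← Nat.even_iff] at this
    exact Nat.not_even_iff_odd.mpr hodd.pow this
  rw [hP.card_edgeFinset_circulantGraph h2 hs, hF, mul_comm, pow_mul, hodd.pow.neg_one_pow]

variable {Φ : SimpleGraph F → Prop}

theorem prop_circulantGraph_of_card_mul_lt (hP : IsPlusSet P)
    (hΦiso : ∀ G₁ G₂ : SimpleGraph F, Nonempty (G₁ ≃g G₂) → (Φ G₁ ↔ Φ G₂))
    (hΦmono : ∀ G₁ G₂ : SimpleGraph F, G₂ ≤ G₁ → Φ G₁ → Φ G₂) {A : Set F}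
    (hΦA : Φ (circulantGraph A)) (B : Finset F) (hB : ↑B ⊆ P)
    (h : #B * (P \ A).ncard < P.ncard) : Φ (circulantGraph (B : Set F)) := by
  obtain ⟨a, ha0, haB⟩ := hP.exists_mul_mem B hB h
  let σ : F ≃+ F := (LinearEquiv.smulOfNeZero F F a ha0).toAddEquiv
  refine (hΦiso _ _ ⟨circulantGraphCongr σ B⟩).mpr (hΦmono _ _ ?_ hΦA)
  rw [circulantGraph_eq_symm A]
  exact circulantGraph_mono (by rintro _ ⟨b, hb, rfl⟩; exact haB b hb)

theorem altEnum_circulantGraph_modEq {p m : ℕ} [Fact p.Prime] (hF : Fintype.card F = p ^ m)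
    (hP : IsPlusSet P) (hΦiso : ∀ G₁ G₂ : SimpleGraph F, Nonempty (G₁ ≃g G₂) → (Φ G₁ ↔ Φ G₂))
    (B : Finset F) (hB : ↑B ⊆ P) :
    altEnum Φ (circulantGraph (B : Set F)) ≡
      ∑ B' ∈ B.powerset, if Φ (circulantGraph (B' : Set F)) then (-1 : ℤ) ^ #B' else 0
        [ZMOD p] := by
  set H := circulantGraph (B : Set F)
  set w : SimpleGraph F → ℤ := fun K => if Φ K then (-1) ^ #K.edgeFinset else 0
  set f : SimpleGraph F → ℤ := fun K => if K ≤ H then w K else 0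
  have hf : ∀ (g : Multiplicative F) K, f (g • K) = f K := by
    intro g K
    have hH : g • H = H := circulantGraph_mem_fixedPoints _ g
    simp only [f, w]
    rw [← hH, smul_le_smul_iff, hH, hΦiso _ _ ⟨(smulIso g K).symm⟩,
      (smulIso g K).card_edgeFinset_eq]
  have hG : IsPGroup p (Multiplicative F) := IsPGroup.of_card (n := m) (by
    rw [← hF, ← Nat.card_eq_fintype_card]; rfl)
  rw [altEnum_eq_sum_le]
  simp only [ite_and]
  calc _ ≡ ∑ K ∈ univ.filter (· ∈ fixedPoints (Multiplicative F) (SimpleGraph F)), f K [ZMOD p] :=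
        hG.sum_modEq_sum_fixedPoints hf
    _ = ∑ K ∈ (univ.filter (· ∈ fixedPoints (Multiplicative F) (SimpleGraph F))).filter (· ≤ H),
          w K := (sum_filter _ _).symm
    _ = ∑ B' ∈ B.powerset, w (circulantGraph ↑B') := hP.sum_fixedPoints_le_circulantGraph w B hB
    _ ≡ _ [ZMOD p] := Int.ModEq.sum fun B' hB' => by
      simp only [w]
      split_ifs
      · convert hP.neg_one_pow_card_edgeFinset_circulantGraph_modEq Fact.out hF
          ((coe_subset.mpr (mem_powerset.mp hB')).trans hB)
      · rfl

theorem not_altEnum_circulantGraph_modEq_zero_of_minimal {p m : ℕ} [Fact p.Prime]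
    (hF : Fintype.card F = p ^ m) (hP : IsPlusSet P)
    (hΦiso : ∀ G₁ G₂ : SimpleGraph F, Nonempty (G₁ ≃g G₂) → (Φ G₁ ↔ Φ G₂))
    {B : Finset F} (hB : ↑B ⊆ P) (hBne : B.Nonempty) (hΦB : ¬Φ (circulantGraph (B : Set F)))
    (hmin : ∀ B' ⊂ B, Φ (circulantGraph (B' : Set F))) :
    ¬altEnum Φ (circulantGraph (B : Set F)) ≡ 0 [ZMOD p] := by
  have hsum : ∑ B' ∈ B.powerset, (if Φ (circulantGraph (B' : Set F)) then (-1 : ℤ) ^ #B' else 0)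
      = -(-1) ^ #B := by
    have hall := sum_powerset_neg_one_pow_card_of_nonempty hBne
    rw [← sum_erase_add _ _ (mem_powerset_self B)] at hall ⊢
    rw [if_neg hΦB, add_zero, sum_congr rfl fun B' hB' => if_pos (hmin B' ?_)]
    · linarith
    · exact ssubset_of_subset_of_ne (mem_powerset.mp (mem_of_mem_erase hB')) (ne_of_mem_erase hB')
  intro h0
  have hdvd := (altEnum_circulantGraph_modEq hF hP hΦiso B hB).symm.trans h0
  rw [hsum, Int.modEq_zero_iff_dvd, dvd_neg] at hdvd
  have : p ∣ 1 := by simpa using Int.natAbs_dvd_natAbs.mpr hdvd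
  exact (Fact.out : p.Prime).one_lt.ne' (Nat.dvd_one.mp this)

theorem le_card_of_not_prop_circulantGraph (hP : IsPlusSet P)
    (hΦiso : ∀ G₁ G₂ : SimpleGraph F, Nonempty (G₁ ≃g G₂) → (Φ G₁ ↔ Φ G₂))
    (hΦmono : ∀ G₁ G₂ : SimpleGraph F, G₂ ≤ G₁ → Φ G₁ → Φ G₂) {c d : ℕ} (hd : 0 < d)
    (hcd : c * d ≤ P.ncard) {A : Set F} (hA : A ⊆ P) (hAcard : P.ncard - d ≤ A.ncard)
    (hΦA : Φ (circulantGraph A)) {B : Finset F} (hB : ↑B ⊆ P)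
    (hΦB : ¬Φ (circulantGraph (B : Set F))) : c ≤ #B := by
  by_contra! hBc
  refine hΦB (hP.prop_circulantGraph_of_card_mul_lt hΦiso hΦmono hΦA B hB ?_)
  have hD : (P \ A).ncard ≤ d := by rw [Set.ncard_sdiff hA]; omega
  calc #B * (P \ A).ncard ≤ #B * d := Nat.mul_le_mul_left _ hD
    _ < c * d := Nat.mul_lt_mul_of_pos_right hBc hd
    _ ≤ P.ncard := hcd

end IsPlusSet

theorem stmt_12_general {F : Type*} [Field F] [Fintype F] [DecidableEq F]
    (p m : ℕ) (hp : p.Prime) (hF : Fintype.card F = p ^ m)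
    (P : Set F) (hP : IsPlusSet P)
    (Φ : SimpleGraph F → Prop)
    (hΦiso : ∀ G₁ G₂ : SimpleGraph F, Nonempty (G₁ ≃g G₂) → (Φ G₁ ↔ Φ G₂))
    (hΦmono : ∀ G₁ G₂ : SimpleGraph F, G₂ ≤ G₁ → Φ G₁ → Φ G₂)
    (hΦnontriv : (∃ G₁ : SimpleGraph F, Φ G₁) ∧ (∃ G₂ : SimpleGraph F, ¬ Φ G₂))
    (c d : ℕ) (hd : 0 < d) (hcd : c * d ≤ P.ncard)
    (A : Set F) (hA : A ⊆ P) (hAcard : P.ncard - d ≤ A.ncard)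
    (hΦA : Φ (SimpleGraph.circulantGraph A)) :
    ∃ B ⊆ P, c ≤ B.ncard ∧
      ¬ (altEnum Φ (SimpleGraph.circulantGraph B) ≡ 0 [ZMOD p]) := by
  have := Fact.mk hp
  obtain ⟨⟨G₁, hG₁⟩, ⟨G₂, hG₂⟩⟩ := hΦnontriv
  have hfail : ∃ B : Finset F, ↑B ⊆ P ∧ ¬Φ (circulantGraph (B : Set F)) := by
    refine ⟨P.toFinset, by simp, ?_⟩
    rw [Set.coe_toFinset, hP.circulantGraph_eq_top]
    exact fun h => hG₂ (hΦmono _ _ le_top h)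
  obtain ⟨B₀, hmin⟩ := exists_minimal_of_wellFoundedLT _ hfail
  obtain ⟨hB₀P, hΦB₀⟩ := hmin.prop
  have hB₀ne : B₀.Nonempty := by
    rw [nonempty_iff_ne_empty]
    rintro rfl
    exact hΦB₀ (hΦmono _ _ (fun u v h => by simp at h) hG₁)
  refine ⟨B₀, hB₀P, ?_, ?_⟩
  · rw [Set.ncard_coe_finset]
    exact hP.le_card_of_not_prop_circulantGraph hΦiso hΦmono hd hcd hA hAcard hΦA hB₀P hΦB₀
  refine hP.not_altEnum_circulantGraph_modEq_zero_of_minimal hF hΦiso hB₀P hB₀ne hΦB₀ ?_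
  intro B' hB'
  by_contra h
  exact hmin.not_prop_of_lt hB' ⟨(coe_subset.mpr hB'.subset).trans hB₀P, h⟩

theorem stmt_12 {F : Type*} [Field F] [Fintype F] [DecidableEq F]
    (p m : ℕ) (hp : p.Prime) (hm : 0 < m) (hF : Fintype.card F = p ^ m)
    (P : Set F) (hP : IsPlusSet P)
    (Φ : SimpleGraph F → Prop)
    (hΦiso : ∀ G₁ G₂ : SimpleGraph F, Nonempty (G₁ ≃g G₂) → (Φ G₁ ↔ Φ G₂))
    (hΦmono : ∀ G₁ G₂ : SimpleGraph F, G₂ ≤ G₁ → Φ G₁ → Φ G₂)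
    (hΦnontriv : (∃ G₁ : SimpleGraph F, Φ G₁) ∧ (∃ G₂ : SimpleGraph F, ¬ Φ G₂))
    (c d : ℕ) (hc : 0 < c) (hd : 0 < d) (hcd : c * d ≤ P.ncard)
    (A : Set F) (hA : A ⊆ P) (hAcard : P.ncard - d ≤ A.ncard)
    (hΦA : Φ (SimpleGraph.circulantGraph A)) :
    ∃ B ⊆ P, c ≤ B.ncard ∧
      ¬ (altEnum Φ (SimpleGraph.circulantGraph B) ≡ 0 [ZMOD p]) :=
  stmt_12_general p m hp hF P hP Φ hΦiso hΦmono hΦnontriv c d hd hcd A hA hAcard hΦA
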